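/- arXiv:1709.02846 — 3 statements merged into one kernel-verified Lean document; each statement's English description precedes it below -/
import Mathlib

section
/- Let Γ be the dual group of an LCA group G, H a closed subgroup of G with annihilator Λ, π : Γ → Γ/Λ the quotient map, and ν a complex regular Borel measure on Γ such that |ν|π⁻¹ is discrete. If |ν| is concentrated on a transversal (there is a Borel set D with |ν|(Γ \ D)=0 and D ∩ (λ+D)=∅ for all λ ∈ Λ \ {0}) and ∫_Γ ⟨γ, y⟩ dν(γ) = 0 for all y ∈ H, then ν = 0. -/
open MeasureTheory Set

noncomputable section

variable {G : Type*} [CommGroup G] [TopologicalSpace G] [IsTopologicalGroup G]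
  [LocallyCompactSpace G] [T2Space G]

/-- The annihilator of a subgroup `H ≤ G` in the Pontryagin dual of `G`:
all characters that are trivial on `H`. -/
def annihilator (H : Subgroup G) : Subgroup (PontryaginDual G) where
  carrier := {γ : PontryaginDual G | ∀ y ∈ H, γ y = 1}
  mul_mem' := fun {a b} ha hb y hy => by
    show a y * b y = 1
    rw [ha y hy, hb y hy, one_mul]
  one_mem' := fun y hy => rfl
  inv_mem' := fun {a} ha y hy => by
    show (a y)⁻¹ = 1
    rw [ha y hy, inv_one]

/-- The trigonometric `H`-polynomials on the dual group: finite sums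
`γ ↦ Σ aₖ ⟨γ, yₖ⟩` with `aₖ ∈ ℂ`, `yₖ ∈ H`. -/
def trigPoly (H : Subgroup G) : Set (PontryaginDual G → ℂ) :=
  {p | ∃ (n : ℕ) (a : Fin n → ℂ) (y : Fin n → G), (∀ i, y i ∈ H) ∧
    p = fun γ => ∑ i, a i * ((γ (y i) : Circle) : ℂ)}

/-- A finite non-negative Borel measure is *regular* (in the sense of the paper). -/
def PaperRegular {X : Type*} [TopologicalSpace X] [MeasurableSpace X]
    (μ : Measure X) : Prop :=
  ∀ B : Set X, MeasurableSet B → ∀ ε : ENNReal, 0 < ε →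
    ∃ C U : Set X, IsCompact C ∧ IsOpen U ∧ C ⊆ B ∧ B ⊆ U ∧ μ (U \ C) < ε

/-- μ is concentrated on a transversal for Λ. -/
def ConcOnTransversal {Γ : Type*} [CommGroup Γ] [TopologicalSpace Γ] [MeasurableSpace Γ]
    (Λ : Subgroup Γ) (μ : Measure Γ) : Prop :=
  ∃ D : Set Γ, MeasurableSet D ∧ μ Dᶜ = 0 ∧
    ∀ l ∈ Λ, l ≠ (1 : Γ) → D ∩ ((fun t => l * t) '' D) = ∅

/-- A family `F` of functions is dense in `L^α(μ)`. -/
def DenseInLp {X : Type*} [MeasurableSpace X] (μ : Measure X) (α : ℝ)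
    (F : Set (X → ℂ)) : Prop :=
  ∀ g : X → ℂ, Measurable g → (∫⁻ x, (‖g x‖₊ : ENNReal) ^ α ∂μ) < ⊤ →
    ∀ ε : ENNReal, 0 < ε → ∃ p ∈ F, (∫⁻ x, (‖g x - p x‖₊ : ENNReal) ^ α ∂μ) < ε

/-- A measure is discrete if it vanishes off a countable set. -/
def IsDiscreteMeasure {X : Type*} [MeasurableSpace X] (μ : Measure X) : Prop :=
  ∃ S : Set X, S.Countable ∧ μ Sᶜ = 0

/-! Since `|ν|π⁻¹` is discrete and `π` is injective on the transversal, `ν` is carried by a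
countable set `C` on which `π` is injective. The hypothesis then says that the absolutely
convergent series `∑_{γ ∈ C} ν{γ} ⟨γ, y⟩` vanishes for all `y ∈ H`, and the restrictions
`γ|_H` are pairwise distinct characters of `H`. Such a series determines its coefficients:
the closure of the image of `H` in `C → Circle` is a compact group, the series extends to it
continuously, and integrating against `k ↦ k γ₀⁻¹` for its Haar measure returns `ν{γ₀}`. -/

theorem integral_coe_monoidHom_circle_eq_zero {K : Type*} [Group K] [MeasurableSpace K]
    [MeasurableMul K] (μ : Measure K) [μ.IsMulLeftInvariant] {χ : K →* Circle} (hχ : χ ≠ 1) :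
    ∫ k, (χ k : ℂ) ∂μ = 0 := by
  obtain ⟨k₀, hk₀⟩ := DFunLike.ne_iff.mp hχ
  have htranslate : (χ k₀ : ℂ) * ∫ k, (χ k : ℂ) ∂μ = ∫ k, (χ k : ℂ) ∂μ := by
    simpa only [map_mul, Circle.coe_mul, integral_const_mul] using
      integral_mul_left_eq_self (μ := μ) (fun k => (χ k : ℂ)) k₀
  have hne : (χ k₀ : ℂ) ≠ 1 := by
    rw [← Circle.coe_one, Ne, Circle.coe_inj]
    exact hk₀
  by_contra h0
  exact hne (mul_right_cancel₀ h0 (htranslate.trans (one_mul _).symm))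

section CoordinateCharacters

variable {ι : Type*}

theorem continuous_tsum_mul_apply {c : ι → ℂ} (hc : Summable (‖c ·‖)) :
    Continuous fun x : ι → Circle => ∑' i, c i * x i := by
  refine continuous_tsum (fun i => continuous_const.mul
    (continuous_subtype_val.comp (continuous_apply i))) hc fun i x => ?_
  rw [norm_mul, Circle.norm_coe, mul_one]

theorem eq_zero_of_forall_tsum_mul_apply_eq_zero [Countable ι] {K : Subgroup (ι → Circle)}
    (hK : IsClosed (K : Set (ι → Circle))) (hsep : ∀ i j, i ≠ j → ∃ k ∈ K, k i ≠ k j)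
    {c : ι → ℂ} (hc : Summable (‖c ·‖)) (hvanish : ∀ k ∈ K, ∑' i, c i * k i = 0) : c = 0 := by
  have : CompactSpace K := isCompact_iff_compactSpace.mp hK.isCompact
  let : MeasurableSpace K := borel K
  have : BorelSpace K := ⟨rfl⟩
  set μ := Measure.haarMeasure (⊤ : TopologicalSpace.PositiveCompacts K)
  have : IsProbabilityMeasure μ := ⟨Measure.haarMeasure_self⟩
  let e : ι → K →* Circle := fun i => (Pi.evalMonoidHom _ i).comp K.subtype
  have he : ∀ i, Continuous (e i) := fun i => (continuous_apply i).comp continuous_subtype_val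
  classical
  ext i₀
  let χ : ι → K →* Circle := fun i => e i / e i₀
  have hχ : ∀ i, Continuous fun k => (χ i k : ℂ) := fun i =>
    continuous_subtype_val.comp ((he i).mul (he i₀).inv)
  have hχ_ne : ∀ i ≠ i₀, χ i ≠ 1 := by
    intro i hi hχ1
    obtain ⟨k, hk, hne⟩ := hsep i i₀ hi
    exact hne (div_eq_one.mp (DFunLike.congr_fun hχ1 ⟨k, hk⟩))
  have hnorm : ∀ i k, ‖c i * (χ i k : ℂ)‖ = ‖c i‖ := fun i k => by
    rw [norm_mul, Circle.norm_coe, mul_one]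
  have hint : ∀ i, Integrable (fun k => c i * (χ i k : ℂ)) μ := fun i =>
    (continuous_const.mul (hχ i)).integrable_of_hasCompactSupport
      (HasCompactSupport.of_compactSpace _)
  have hcoeff : ∀ i, ∫ k, c i * (χ i k : ℂ) ∂μ = if i = i₀ then c i₀ else 0 := by
    intro i
    rw [integral_const_mul]
    split_ifs with hi
    · subst hi
      simp [χ]
    · rw [integral_coe_monoidHom_circle_eq_zero μ (hχ_ne i hi), mul_zero]
  calc c i₀ = ∑' i, ∫ k, c i * (χ i k : ℂ) ∂μ := by
        rw [tsum_congr hcoeff, tsum_ite_eq]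
    _ = ∫ k, ((e i₀ k)⁻¹ : Circle) * ∑' i, c i * (k : ι → Circle) i ∂μ := by
        have hsum : Summable fun i => ∫ k, ‖c i * (χ i k : ℂ)‖ ∂μ := by
          simpa only [hnorm, integral_const, probReal_univ, one_smul] using hc
        rw [integral_tsum_of_summable_integral_norm hint hsum]
        congr 1 with k
        rw [← tsum_mul_left]
        congr 1 with i
        simp only [χ, e, div_eq_mul_inv, MonoidHom.mul_apply, MonoidHom.inv_apply, Circle.coe_mul,
          Circle.coe_inv, MonoidHom.comp_apply, Pi.evalMonoidHom_apply, Subgroup.coe_subtype]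
        ring
    _ = 0 := by simp [hvanish _ (SetLike.coe_mem _)]

theorem eq_zero_of_forall_tsum_mul_monoidHom_eq_zero [Countable ι] {A : Type*} [Group A]
    {χ : ι → A →* Circle} (hχ : Function.Injective χ) {c : ι → ℂ} (hc : Summable (‖c ·‖))
    (hvanish : ∀ a, ∑' i, c i * χ i a = 0) : c = 0 := by
  let K := (MonoidHom.pi χ).range.topologicalClosure
  refine eq_zero_of_forall_tsum_mul_apply_eq_zero (K := K)
    (MonoidHom.pi χ).range.isClosed_topologicalClosure (fun i j hij => ?_) hc fun k hk => ?_
  · obtain ⟨a, ha⟩ := DFunLike.ne_iff.mp (hχ.ne hij)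
    exact ⟨MonoidHom.pi χ a, (MonoidHom.pi χ).range.le_topologicalClosure ⟨a, rfl⟩, ha⟩
  · have hzero : closure (Set.range (MonoidHom.pi χ)) ⊆
        (fun x : ι → Circle => ∑' i, c i * x i) ⁻¹' {0} :=
      closure_minimal (Set.range_subset_iff.mpr hvanish)
        (isClosed_singleton.preimage (continuous_tsum_mul_apply hc))
    exact hzero hk

end CoordinateCharacters

section DiscreteMeasures

variable {X : Type*} [MeasurableSpace X] {μ : Measure X}

theorem integral_eq_tsum_of_measure_compl_eq_zero [MeasurableSingletonClass X] {E : Type*}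
    [NormedAddCommGroup E] [NormedSpace ℝ E] [CompleteSpace E] {C : Set X} (hC : C.Countable)
    (hμC : μ Cᶜ = 0) {f : X → E} (hf : Integrable f μ) :
    ∫ x, f x ∂μ = ∑' x : C, μ.real {(x : X)} • f x := by
  have hrestrict : μ.restrict C = μ := Measure.restrict_eq_self_of_ae_mem (ae_iff.mpr hμC)
  rw [← setIntegral_countable f hC (by rwa [IntegrableOn, hrestrict]), hrestrict]

theorem summable_measureReal_singleton [MeasurableSingletonClass X] [IsFiniteMeasure μ]
    {C : Set X} (hC : C.Countable) : Summable fun x : C => μ.real {(x : X)} := by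
  refine ENNReal.summable_toReal ?_
  simpa using (tsum_measure_preimage_singleton (μ := μ) hC (f := id)
    fun x _ => measurableSet_singleton x).trans_lt (measure_lt_top μ _) |>.ne

theorem norm_measureReal_singleton_smul {E : Type*} [NormedAddCommGroup E] [NormedSpace ℝ E]
    {h : X → E} (hh : ∀ᵐ x ∂μ, ‖h x‖ = 1) (x : X) : ‖μ.real {x} • h x‖ = μ.real {x} := by
  by_cases hx : μ {x} = 0
  · simp [measureReal_def, hx]
  · have hx1 : ‖h x‖ = 1 := by
      by_contra hne
      exact hx (measure_mono_null (singleton_subset_iff.mpr hne) (ae_iff.mp hh))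
    rw [norm_smul, hx1, mul_one, Real.norm_of_nonneg measureReal_nonneg]

theorem MeasureTheory.Measure.eq_zero_of_measureReal_singleton_eq_zero [IsFiniteMeasure μ]
    {C : Set X} (hC : C.Countable) (hμC : μ Cᶜ = 0) (hatoms : ∀ x ∈ C, μ.real {x} = 0) : μ = 0 := by
  have hμC' : μ C = 0 := by
    rw [← biUnion_of_singleton C, measure_biUnion_null_iff hC]
    exact fun x hx => (measureReal_eq_zero_iff).mp (hatoms x hx)
  rw [← Measure.measure_univ_eq_zero, ← union_compl_self C]
  exact measure_union_null hμC' hμC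

end DiscreteMeasures

theorem injOn_mk_of_inter_mul_image_eq_empty {Γ : Type*} [CommGroup Γ] {Λ : Subgroup Γ}
    {D : Set Γ} (hD : ∀ l ∈ Λ, l ≠ 1 → D ∩ (fun t => l * t) '' D = ∅) :
    InjOn (QuotientGroup.mk : Γ → Γ ⧸ Λ) D := by
  intro a ha b hb hab
  by_contra hne
  have hb' : b ∈ D ∩ (fun t => a⁻¹ * b * t) '' D := ⟨hb, a, ha, by simp⟩
  rw [hD _ (QuotientGroup.eq.mp hab) fun h1 => hne (inv_mul_eq_one.mp h1)] at hb'
  exact hb'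

theorem ConcOnTransversal.exists_countable_injOn {Γ : Type*} [CommGroup Γ] [TopologicalSpace Γ]
    [MeasurableSpace Γ] {Λ : Subgroup Γ} {m : Measure Γ} (htrans : ConcOnTransversal Λ m)
    (hdisc : IsDiscreteMeasure (m.map (QuotientGroup.mk (s := Λ)))) :
    ∃ C : Set Γ, C.Countable ∧ m Cᶜ = 0 ∧ InjOn (QuotientGroup.mk : Γ → Γ ⧸ Λ) C := by
  obtain ⟨S, hS, hSnull⟩ := hdisc
  obtain ⟨D, -, hDnull, hD⟩ := htrans
  have hinj := (injOn_mk_of_inter_mul_image_eq_empty hD).mono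
    (inter_subset_left (t := QuotientGroup.mk ⁻¹' S))
  refine ⟨_, ((mapsTo_preimage _ S).mono_left inter_subset_right).countable_of_injOn hinj hS, ?_,
    hinj⟩
  have hfiber : m (QuotientGroup.mk ⁻¹' S)ᶜ = 0 := nonpos_iff_eq_zero.mp
    ((Measure.le_map_apply QuotientGroup.measurable_coe.aemeasurable Sᶜ).trans_eq hSnull)
  rw [compl_inter]
  exact measure_union_null hDnull hfiber

section PontryaginDual

variable {A : Type*} [CommGroup A] [TopologicalSpace A]

theorem MeasureTheory.Integrable.coe_apply_mul [MeasurableSpace (PontryaginDual A)]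
    [BorelSpace (PontryaginDual A)] {m : Measure (PontryaginDual A)} {h : PontryaginDual A → ℂ}
    (hh : Integrable h m) (y : A) :
    Integrable (fun γ : PontryaginDual A => ((γ y : Circle) : ℂ) * h γ) m := by
  have heval : Continuous fun γ : PontryaginDual A => ((γ y : Circle) : ℂ) :=
    continuous_subtype_val.comp (continuous_eval_const (F := ContinuousMonoidHom A Circle) y)
  exact hh.bdd_mul heval.aestronglyMeasurable (c := 1) (ae_of_all _ fun γ => (Circle.norm_coe _).le)

theorem injective_comp_subtype_of_injOn_mk {H : Subgroup A} {C : Set (PontryaginDual A)}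
    (hC : InjOn (QuotientGroup.mk : PontryaginDual A → _ ⧸ annihilator H) C) :
    Function.Injective fun γ : C => (γ : PontryaginDual A).toMonoidHom.comp H.subtype := by
  intro γ₁ γ₂ hγ
  refine Subtype.ext (hC γ₁.2 γ₂.2 (QuotientGroup.eq.mpr fun y hy => ?_))
  have hy : γ₁.1 y = γ₂.1 y := DFunLike.congr_fun hγ ⟨y, hy⟩
  show (γ₁.1 y)⁻¹ * γ₂.1 y = 1
  rw [hy, inv_mul_cancel]

end PontryaginDual

/-- The complex measure `ν = h • m` is given in polar form: `m = |ν|` and `‖h‖ = 1` `m`-a.e. -/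
theorem vanishing_fourier_implies_zero_discrete_general
    (H : Subgroup G)
    [MeasurableSpace (PontryaginDual G)] [BorelSpace (PontryaginDual G)]
    (m : Measure (PontryaginDual G)) [IsFiniteMeasure m]
    (h : PontryaginDual G → ℂ) (hmeas : Measurable h) (hnorm : ∀ᵐ γ ∂m, ‖h γ‖ = 1)
    (hdisc : IsDiscreteMeasure (m.map (QuotientGroup.mk (s := annihilator H))))
    (htrans : ConcOnTransversal (annihilator H) m)
    (hvanish : ∀ y ∈ H, (∫ γ : PontryaginDual G, ((γ y : Circle) : ℂ) * h γ ∂m) = 0) :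
    m = 0 := by
  obtain ⟨C, hC, hCc, hinj⟩ := htrans.exists_countable_injOn hdisc
  have : Countable C := hC.to_subtype
  have hh : Integrable h m :=
    .of_bound hmeas.aestronglyMeasurable 1 (hnorm.mono fun _ hγ => hγ.le)
  let c : C → ℂ := fun γ => m.real {(γ : PontryaginDual G)} • h γ
  have hc_norm : ∀ γ : C, ‖c γ‖ = m.real {(γ : PontryaginDual G)} := fun γ =>
    norm_measureReal_singleton_smul hnorm γ
  have hc : c = 0 := by
    refine eq_zero_of_forall_tsum_mul_monoidHom_eq_zero (injective_comp_subtype_of_injOn_mk hinj)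
      (by simpa only [hc_norm] using summable_measureReal_singleton hC) fun y => ?_
    rw [← hvanish y y.2, integral_eq_tsum_of_measure_compl_eq_zero hC hCc (hh.coe_apply_mul y)]
    congr 1 with γ
    show m.real {_} • h γ * (γ.1 y : ℂ) = m.real {_} • ((γ.1 y : ℂ) * h γ)
    rw [smul_mul_assoc, mul_comm]
  refine Measure.eq_zero_of_measureReal_singleton_eq_zero hC hCc fun γ hγ => ?_
  simpa [hc_norm] using congr_arg norm (congr_fun hc ⟨γ, hγ⟩)

/-- Lemma 3.1: let ν = h·dm be a complex regular Borel measure on the dual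
group Γ of G, given in polar form by its total variation m and a density h of modulus one.
If mπ⁻¹ is discrete, m is concentrated on a transversal for the annihilator Λ of H, and
∫ ⟨γ,y⟩ dν(γ) = 0 for all y ∈ H, then ν = 0 (equivalently m = 0). -/
theorem vanishing_fourier_implies_zero_discrete
    (H : Subgroup G) (hH : IsClosed (H : Set G))
    [MeasurableSpace (PontryaginDual G)] [BorelSpace (PontryaginDual G)]
    (m : Measure (PontryaginDual G)) [IsFiniteMeasure m] (hreg : PaperRegular m)
    (h : PontryaginDual G → ℂ) (hmeas : Measurable h) (hnorm : ∀ᵐ γ ∂m, ‖h γ‖ = 1)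
    (hdisc : IsDiscreteMeasure (m.map (QuotientGroup.mk (s := annihilator H))))
    (htrans : ConcOnTransversal (annihilator H) m)
    (hvanish : ∀ y ∈ H, (∫ γ : PontryaginDual G, ((γ y : Circle) : ℂ) * h γ ∂m) = 0) :
    m = 0 :=
  vanishing_fourier_implies_zero_discrete_general H m h hmeas hnorm hdisc htrans hvanish
end
end

section
/- Let G be an LCA group, H a closed subgroup, Γ the dual group, Λ the annihilator of H, and μ a regular finite non-negative Borel measure on Γ such that the image measure μπ⁻¹ on Γ/Λ is discrete. If μ is concentrated on a transversal, then the space P(H) of trigonometric H-polynomials is dense in L^α(μ) for every α ∈ (0,∞). -/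
open MeasureTheory Set

noncomputable section

variable {G : Type*} [CommGroup G] [TopologicalSpace G] [IsTopologicalGroup G]
  [LocallyCompactSpace G] [T2Space G]

/-!
Since `μ` is concentrated on a transversal `D` and its image on `Γ/Λ` is discrete, `μ` is carried
by a countable set `T ⊆ D` on which the quotient map is injective; so the characters `⟨·, h⟩`,
`h ∈ H`, separate the points of `T`. Cesàro means of the powers of such a character are
trigonometric polynomials bounded by `1`, equal to `1` at a point `x` and small at a point `z`;
products of them converge boundedly on `T` to the indicator of `{x}`. Hence every finitely
supported function on `T` is a bounded pointwise limit of trigonometric polynomials, thus an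
`L^α(μ)`-limit by dominated convergence, and such functions are `L^α(μ)`-dense because `μ` is
carried by `T`.
-/

open Filter Topology
open scoped ENNReal

section GeomMean

def geomMean (u : ℂ) (m : ℕ) : ℂ := ((m + 1 : ℕ) : ℂ)⁻¹ * ∑ k ∈ Finset.range (m + 1), u ^ k

lemma geomMean_one (m : ℕ) : geomMean 1 m = 1 := by
  simp only [geomMean, one_pow, Finset.sum_const, Finset.card_range, nsmul_one]
  exact inv_mul_cancel₀ (Nat.cast_ne_zero.mpr m.succ_ne_zero)

lemma norm_geomMean_le_one {u : ℂ} (hu : ‖u‖ ≤ 1) (m : ℕ) : ‖geomMean u m‖ ≤ 1 := by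
  rw [geomMean, norm_mul, norm_inv, Complex.norm_natCast, inv_mul_le_iff₀ (by positivity),
    mul_one]
  calc ‖∑ k ∈ Finset.range (m + 1), u ^ k‖ ≤ ∑ k ∈ Finset.range (m + 1), ‖u ^ k‖ :=
        norm_sum_le _ _
    _ ≤ ∑ k ∈ Finset.range (m + 1), 1 :=
        Finset.sum_le_sum fun k _ => by simpa using pow_le_one₀ (norm_nonneg u) hu
    _ = (m + 1 : ℕ) := by simp

lemma tendsto_geomMean_zero {u : ℂ} (hu : ‖u‖ ≤ 1) (hu1 : u ≠ 1) :
    Tendsto (geomMean u) atTop (𝓝 0) := by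
  have hbound (m : ℕ) : ‖geomMean u m‖ ≤ 1 / ((m : ℝ) + 1) * (2 / ‖u - 1‖) := by
    rw [geomMean, geom_sum_eq hu1, norm_mul, norm_inv, norm_div, Complex.norm_natCast,
      one_div, Nat.cast_succ]
    gcongr
    calc ‖u ^ (m + 1) - 1‖ ≤ ‖u ^ (m + 1)‖ + ‖(1 : ℂ)‖ := norm_sub_le _ _
      _ ≤ 1 + 1 := by gcongr <;> simp [pow_le_one₀ (norm_nonneg u) hu]
      _ = 2 := by norm_num
  refine squeeze_zero_norm hbound ?_
  simpa using (tendsto_one_div_add_atTop_nhds_zero_nat (𝕜 := ℝ)).mul_const (2 / ‖u - 1‖)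

end GeomMean

section Peak

variable {X : Type*}

open Classical in
lemma exists_seq_tendsto_ite_of_countable (S : Submonoid (X → ℂ)) {T : Set X}
    (hT : T.Countable) {i : X}
    (hc : ∀ z ∈ T, z ≠ i → ∃ c : ℕ → X → ℂ, (∀ n, c n ∈ S) ∧ (∀ n x, ‖c n x‖ ≤ 1) ∧
      (∀ n, c n i = 1) ∧ Tendsto (fun n => c n z) atTop (𝓝 0)) :
    ∃ q : ℕ → X → ℂ, (∀ n, q n ∈ S) ∧ (∀ n x, ‖q n x‖ ≤ 1) ∧
      ∀ z ∈ T, Tendsto (fun n => q n z) atTop (𝓝 (if z = i then 1 else 0)) := by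
  have : Nonempty X := ⟨i⟩
  obtain ⟨e, he⟩ := Set.countable_iff_exists_subset_range.mp hT
  have hc' (k : ℕ) : ∃ c : ℕ → X → ℂ, (∀ n, c n ∈ S) ∧ (∀ n x, ‖c n x‖ ≤ 1) ∧
      (∀ n, c n i = 1) ∧ (e k ∈ T → e k ≠ i → Tendsto (fun n => c n (e k)) atTop (𝓝 0)) := by
    by_cases hk : e k ∈ T ∧ e k ≠ i
    · obtain ⟨c, hcS, hc1, hci, hck⟩ := hc _ hk.1 hk.2
      exact ⟨c, hcS, hc1, hci, fun _ _ => hck⟩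
    · exact ⟨1, fun _ => S.one_mem, by simp, by simp, fun h h' => (hk ⟨h, h'⟩).elim⟩
  choose c hcS hc1 hci hck using hc'
  -- Diagonal choice: the `n`-th product involves the first `n` points, each at stage `n`.
  refine ⟨fun n => ∏ k ∈ Finset.range n, c k n, fun n => prod_mem fun k _ => hcS k n,
    fun n x => ?_, fun z hz => ?_⟩
  · simp only [Finset.prod_apply, norm_prod]
    exact Finset.prod_le_one (fun _ _ => norm_nonneg _) fun k _ => hc1 k n x
  split_ifs with hzi
  · subst hzi
    simp [Finset.prod_apply, hci]
  obtain ⟨k, rfl⟩ := he hz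
  refine squeeze_zero_norm' ?_ (tendsto_zero_iff_norm_tendsto_zero.mp (hck k hz hzi))
  filter_upwards [eventually_gt_atTop k] with n hn
  simp only [Finset.prod_apply, norm_prod]
  rw [← Finset.mul_prod_erase _ _ (Finset.mem_range.mpr hn)]
  exact mul_le_of_le_one_right (norm_nonneg _)
    (Finset.prod_le_one (fun _ _ => norm_nonneg _) fun j _ => hc1 j n _)

open Classical in
lemma exists_seq_tendsto_indicator (S : Subalgebra ℂ (X → ℂ)) {T : Set X}
    (hpeak : ∀ i ∈ T, ∃ q : ℕ → X → ℂ, (∀ n, q n ∈ S) ∧ (∀ n x, ‖q n x‖ ≤ 1) ∧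
      ∀ z ∈ T, Tendsto (fun n => q n z) atTop (𝓝 (if z = i then 1 else 0)))
    (F : Finset X) (hF : ↑F ⊆ T) (g : X → ℂ) :
    ∃ p : ℕ → X → ℂ, (∀ n, p n ∈ S) ∧ (∀ n x, ‖p n x‖ ≤ ∑ i ∈ F, ‖g i‖) ∧
      ∀ z ∈ T, Tendsto (fun n => p n z) atTop (𝓝 ((F : Set X).indicator g z)) := by
  choose! q hqS hq1 hqlim using hpeak
  refine ⟨fun n => ∑ i ∈ F, g i • q i n, fun n => ?_, fun n x => ?_, fun z hz => ?_⟩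
  · exact S.sum_mem fun i hi => S.smul_mem (hqS i (hF hi) n) _
  · simp only [Finset.sum_apply]
    refine (norm_sum_le _ _).trans (Finset.sum_le_sum fun i hi => ?_)
    rw [Pi.smul_apply, norm_smul]
    exact mul_le_of_le_one_right (norm_nonneg _) (hq1 i (hF hi) n x)
  have hlim := tendsto_finsetSum F fun i hi => (hqlim i (hF hi) z hz).const_smul (g i)
  simpa [Finset.sum_apply, Set.indicator_apply, Finset.sum_ite_eq'] using hlim

end Peak

section LpClosure

variable {X : Type*} [MeasurableSpace X] {μ : Measure X} {α : ℝ} {A : Set (X → ℂ)}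

def MemLpClosure (μ : Measure X) (α : ℝ) (A : Set (X → ℂ)) (f : X → ℂ) : Prop :=
  ∀ ε : ℝ≥0∞, 0 < ε → ∃ p ∈ A, ∫⁻ x, ‖f x - p x‖ₑ ^ α ∂μ < ε

lemma memLpClosure_of_mem (hα : 0 < α) {f : X → ℂ} (hf : f ∈ A) : MemLpClosure μ α A f :=
  fun ε hε => ⟨f, hf, by simpa [ENNReal.zero_rpow_of_pos hα] using hε⟩

lemma tendsto_lintegral_rpow_sub (hα : 0 < α) {f : X → ℂ} {F : ℕ → X → ℂ}
    (hf : Measurable f) (hF : ∀ n, Measurable (F n)) (b : X → ℝ≥0∞) (hb : ∫⁻ x, b x ∂μ ≠ ∞)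
    (hbound : ∀ n x, ‖f x - F n x‖ₑ ^ α ≤ b x)
    (hlim : ∀ᵐ x ∂μ, Tendsto (fun n => F n x) atTop (𝓝 (f x))) :
    Tendsto (fun n => ∫⁻ x, ‖f x - F n x‖ₑ ^ α ∂μ) atTop (𝓝 0) := by
  have := tendsto_lintegral_of_dominated_convergence b (fun n => by fun_prop)
    (fun n => ae_of_all _ (hbound n)) hb (f := 0) (hlim.mono fun x hx => ?_)
  · simpa using this
  have hx' : Tendsto (fun n => ‖f x - F n x‖ₑ) atTop (𝓝 0) := by
    simpa using ((tendsto_const_nhds (x := f x)).sub hx).enorm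
  simpa [Function.comp_def, ENNReal.zero_rpow_of_pos hα] using
    ((ENNReal.continuous_rpow_const (y := α)).tendsto 0).comp hx'

lemma MemLpClosure.of_tendsto (hα : 0 ≤ α) {f : X → ℂ} {F : ℕ → X → ℂ}
    (hf : Measurable f) (hF : ∀ n, Measurable (F n)) (hFA : ∀ n, MemLpClosure μ α A (F n))
    (hlim : Tendsto (fun n => ∫⁻ x, ‖f x - F n x‖ₑ ^ α ∂μ) atTop (𝓝 0)) :
    MemLpClosure μ α A f := by
  choose p hpA hp using fun n => hFA n (n : ℝ≥0∞)⁻¹ (ENNReal.inv_pos.2 (ENNReal.natCast_ne_top n))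
  set K := ENNReal.LpAddConst (ENNReal.ofReal α)⁻¹
  have hK : K ≠ ∞ := (ENNReal.LpAddConst_lt_top _).ne
  have hle (n : ℕ) : ∫⁻ x, ‖f x - p n x‖ₑ ^ α ∂μ ≤
      K * (∫⁻ x, ‖f x - F n x‖ₑ ^ α ∂μ + (n : ℝ≥0∞)⁻¹) := by
    -- `∫ ‖·‖ₑ ^ α` satisfies the triangle inequality only up to the factor `K`.
    calc ∫⁻ x, ‖f x - p n x‖ₑ ^ α ∂μ
        ≤ ∫⁻ x, K * (‖f x - F n x‖ₑ ^ α + ‖F n x - p n x‖ₑ ^ α) ∂μ := by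
          refine lintegral_mono fun x => ?_
          refine (ENNReal.rpow_le_rpow ?_ hα).trans (ENNReal.rpow_add_le_mul_rpow_add_rpow' _ _ hα)
          simpa [edist_eq_enorm_sub] using edist_triangle (f x) (F n x) (p n x)
      _ = K * (∫⁻ x, ‖f x - F n x‖ₑ ^ α ∂μ + ∫⁻ x, ‖F n x - p n x‖ₑ ^ α ∂μ) := by
          rw [lintegral_const_mul' _ _ hK, lintegral_add_left (by fun_prop)]
      _ ≤ K * (∫⁻ x, ‖f x - F n x‖ₑ ^ α ∂μ + (n : ℝ≥0∞)⁻¹) := by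
          gcongr
          exact (hp n).le
  have hbound : Tendsto (fun n => K * (∫⁻ x, ‖f x - F n x‖ₑ ^ α ∂μ + (n : ℝ≥0∞)⁻¹))
      atTop (𝓝 0) := by
    simpa using ENNReal.Tendsto.const_mul (hlim.add ENNReal.tendsto_inv_nat_nhds_zero) (.inr hK)
  intro ε hε
  obtain ⟨n, hn⟩ := ((tendsto_of_tendsto_of_tendsto_of_le_of_le tendsto_const_nhds hbound
    (fun _ => zero_le) hle).eventually (gt_mem_nhds hε)).exists
  exact ⟨p n, hpA n, hn⟩

end LpClosure

section LpClosureCountable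

variable {X : Type*} [MeasurableSpace X] [MeasurableSingletonClass X] {μ : Measure X}
  [IsFiniteMeasure μ] {α : ℝ} {A : Set (X → ℂ)}

lemma memLpClosure_indicator (hα : 0 < α) (hAm : ∀ p ∈ A, Measurable p) {T : Set X}
    (hT : ∀ᵐ x ∂μ, x ∈ T) {F : Finset X} {g : X → ℂ} (hg : Measurable g) {p : ℕ → X → ℂ}
    (hpA : ∀ n, p n ∈ A) (hp : ∀ n x, ‖p n x‖ ≤ ∑ i ∈ F, ‖g i‖)
    (hlim : ∀ z ∈ T, Tendsto (fun n => p n z) atTop (𝓝 ((F : Set X).indicator g z))) :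
    MemLpClosure μ α A ((F : Set X).indicator g) := by
  set C := ∑ i ∈ F, ‖g i‖
  have hind (x : X) : ‖(F : Set X).indicator g x‖ ≤ C := by
    by_cases hx : x ∈ F
    · simpa [hx] using Finset.single_le_sum (fun i _ => norm_nonneg (g i)) hx
    · simpa [hx] using Finset.sum_nonneg fun i _ => norm_nonneg (g i)
  refine MemLpClosure.of_tendsto hα.le (hg.indicator F.measurableSet)
    (fun n => hAm _ (hpA n)) (fun n => memLpClosure_of_mem hα (hpA n)) ?_
  refine tendsto_lintegral_rpow_sub hα (hg.indicator F.measurableSet) (fun n => hAm _ (hpA n))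
    (fun _ => ENNReal.ofReal (C + C) ^ α) ?_ (fun n x => ?_) (hT.mono hlim)
  · rw [lintegral_const]
    exact ENNReal.mul_ne_top (ENNReal.rpow_ne_top_of_nonneg hα.le ENNReal.ofReal_ne_top)
      (measure_ne_top _ _)
  · rw [← ofReal_norm]
    gcongr
    exact (norm_sub_le _ _).trans (add_le_add (hind x) (hp n x))

lemma memLpClosure_of_countable [Nonempty X] (hα : 0 < α) (hAm : ∀ p ∈ A, Measurable p)
    {T : Set X} (hT : T.Countable) (hTμ : ∀ᵐ x ∂μ, x ∈ T)
    (happrox : ∀ F : Finset X, ↑F ⊆ T → ∀ g : X → ℂ, ∃ p : ℕ → X → ℂ, (∀ n, p n ∈ A) ∧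
      (∀ n x, ‖p n x‖ ≤ ∑ i ∈ F, ‖g i‖) ∧
      ∀ z ∈ T, Tendsto (fun n => p n z) atTop (𝓝 ((F : Set X).indicator g z)))
    {g : X → ℂ} (hg : Measurable g) (hgint : ∫⁻ x, ‖g x‖ₑ ^ α ∂μ ≠ ∞) :
    MemLpClosure μ α A g := by
  classical
  obtain ⟨e, he⟩ := Set.countable_iff_exists_subset_range.mp hT
  set F : ℕ → Finset X := fun n => ((Finset.range n).image e).filter (· ∈ T)
  have hFT (n : ℕ) : ↑(F n) ⊆ T := fun x hx => (Finset.mem_filter.mp hx).2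
  have hFg (n : ℕ) : Measurable ((F n : Set X).indicator g) :=
    hg.indicator (F n).measurableSet
  refine MemLpClosure.of_tendsto hα.le hg hFg (fun n => ?_) ?_
  · obtain ⟨p, hpA, hp, hlim⟩ := happrox (F n) (hFT n) g
    exact memLpClosure_indicator hα hAm hTμ hg hpA hp hlim
  refine tendsto_lintegral_rpow_sub hα hg hFg (fun x => ‖g x‖ₑ ^ α) hgint (fun n x => ?_)
    (hTμ.mono fun x hx => ?_)
  · gcongr
    by_cases hx : x ∈ F n <;> simp [hx]
  · obtain ⟨k, rfl⟩ := he hx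
    refine tendsto_const_nhds.congr' ?_
    filter_upwards [eventually_gt_atTop k] with n hn
    rw [Set.indicator_of_mem (by simpa [F, hx] using ⟨k, hn, rfl⟩)]

end LpClosureCountable

section Transversal

variable {Γ : Type*} [CommGroup Γ] {Λ : Subgroup Γ}

lemma injOn_mk_of_transversal {D : Set Γ}
    (hD : ∀ l ∈ Λ, l ≠ (1 : Γ) → D ∩ ((fun t => l * t) '' D) = ∅) :
    InjOn (QuotientGroup.mk : Γ → Γ ⧸ Λ) D := by
  intro x hx z hz hxz
  by_contra hne
  have hzD : z ∈ D ∩ ((fun t => x⁻¹ * z * t) '' D) := ⟨hz, x, hx, by simp⟩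
  rwa [hD _ (QuotientGroup.eq.mp hxz) (by rwa [Ne, inv_mul_eq_one])] at hzD

lemma exists_countable_injOn_mk [TopologicalSpace Γ] [MeasurableSpace Γ] {μ : Measure Γ}
    (htrans : ConcOnTransversal Λ μ)
    (hdisc : IsDiscreteMeasure (μ.map (QuotientGroup.mk (s := Λ)))) :
    ∃ T : Set Γ, T.Countable ∧ (∀ᵐ x ∂μ, x ∈ T) ∧ InjOn (QuotientGroup.mk : Γ → Γ ⧸ Λ) T := by
  obtain ⟨S, hS, hSμ⟩ := hdisc
  obtain ⟨D, -, hDμ, hD⟩ := htrans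
  refine ⟨D ∩ QuotientGroup.mk ⁻¹' S, ?_, ?_, (injOn_mk_of_transversal hD).mono inter_subset_left⟩
  · exact (mapsTo_preimage _ S).mono_left inter_subset_right
      |>.countable_of_injOn ((injOn_mk_of_transversal hD).mono inter_subset_left) hS
  · rw [ae_iff, ← compl_def, compl_inter, ← preimage_compl]
    exact measure_union_null hDμ
      (Measure.preimage_null_of_map_null measurable_quotient_mk''.aemeasurable hSμ)

end Transversal

section Dual

variable {G : Type*} [CommGroup G] [TopologicalSpace G]

namespace PontryaginDual

def evalHom : G →* (PontryaginDual G → ℂ) where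
  toFun y γ := γ y
  map_one' := by ext; simp
  map_mul' y z := by ext γ; simp

@[simp]
lemma evalHom_apply (y : G) (γ : PontryaginDual G) : evalHom y γ = γ y := rfl

end PontryaginDual

open PontryaginDual

lemma trigPoly_eq_span (H : Subgroup G) :
    trigPoly H = Submodule.span ℂ (evalHom '' (H : Set G)) := by
  ext p
  rw [SetLike.mem_coe, Submodule.mem_span_set']
  constructor
  · rintro ⟨n, a, y, hy, rfl⟩
    exact ⟨n, a, fun i => ⟨evalHom (y i), mem_image_of_mem _ (hy i)⟩, by ext; simp⟩
  · rintro ⟨n, a, g, rfl⟩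
    choose y hy hyg using fun i => (g i).2
    exact ⟨n, a, y, hy, by ext; simp [← hyg]⟩

lemma trigPoly_eq_adjoin (H : Subgroup G) :
    trigPoly H = Algebra.adjoin ℂ (evalHom '' (H : Set G)) := by
  rw [trigPoly_eq_span, ← Algebra.adjoin_eq_span_of_subset]
  · rfl
  · have : Submonoid.closure (evalHom '' (H : Set G)) ≤ H.toSubmonoid.map evalHom :=
      Submonoid.closure_le.mpr subset_rfl
    exact fun f hf => Submodule.subset_span (this hf)

lemma continuous_of_mem_trigPoly {H : Subgroup G} {p : PontryaginDual G → ℂ}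
    (hp : p ∈ trigPoly H) : Continuous p := by
  obtain ⟨n, a, y, -, rfl⟩ := hp
  have (y : G) : Continuous fun γ : PontryaginDual G => γ y :=
    continuous_eval_const (F := G →ₜ* Circle) y
  exact continuous_finsetSum _ fun i _ =>
    continuous_const.mul (continuous_subtype_val.comp (this (y i)))

lemma exists_apply_ne_of_injOn_mk {H : Subgroup G} {T : Set (PontryaginDual G)}
    (hT : InjOn (QuotientGroup.mk (s := annihilator H)) T) {x z : PontryaginDual G}
    (hx : x ∈ T) (hz : z ∈ T) (hxz : x ≠ z) : ∃ h ∈ H, x h ≠ z h := by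
  by_contra! hxz'
  refine hxz (hT hx hz (QuotientGroup.eq.mpr fun y hy => ?_))
  show (x y)⁻¹ * z y = 1
  rw [hxz' y hy, inv_mul_cancel]

lemma exists_seq_trigPoly_peak {H : Subgroup G} {x z : PontryaginDual G} {h : G} (hh : h ∈ H)
    (hxz : x h ≠ z h) :
    ∃ c : ℕ → PontryaginDual G → ℂ, (∀ n, c n ∈ trigPoly H) ∧ (∀ n γ, ‖c n γ‖ ≤ 1) ∧
      (∀ n, c n x = 1) ∧ Tendsto (fun n => c n z) atTop (𝓝 0) := by
  set c : ℕ → PontryaginDual G → ℂ := fun n γ => geomMean ((x h)⁻¹ * γ h : Circle) n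
  have hc (n : ℕ) :
      c n = ((n + 1 : ℕ) : ℂ)⁻¹ • ∑ k ∈ Finset.range (n + 1), ((x h : ℂ)⁻¹ • evalHom h) ^ k := by
    ext γ
    simp [c, geomMean, Finset.sum_apply]
  refine ⟨c, fun n => ?_, fun n γ => norm_geomMean_le_one (Circle.norm_coe _).le n,
    fun n => by simp [c, geomMean_one],
    tendsto_geomMean_zero (Circle.norm_coe _).le fun h1 => hxz ?_⟩
  · rw [hc, trigPoly_eq_adjoin]
    exact Subalgebra.smul_mem _ (Subalgebra.sum_mem _ fun k _ => Subalgebra.pow_mem _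
      (Subalgebra.smul_mem _ (Algebra.subset_adjoin (mem_image_of_mem _ hh)) _) _) _
  · exact inv_mul_eq_one.mp (Circle.coe_eq_one.mp h1)

end Dual

theorem dense_of_transversal_discrete_general
    (H : Subgroup G)
    [MeasurableSpace (PontryaginDual G)] [BorelSpace (PontryaginDual G)]
    (μ : Measure (PontryaginDual G)) [IsFiniteMeasure μ]
    (hdisc : IsDiscreteMeasure (μ.map (QuotientGroup.mk (s := annihilator H))))
    (htrans : ConcOnTransversal (annihilator H) μ) :
    ∀ α : ℝ, 0 < α → DenseInLp μ α (trigPoly H) := by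
  intro α hα g hg hgint
  obtain ⟨T, hTc, hTμ, hinj⟩ := exists_countable_injOn_mk htrans hdisc
  refine memLpClosure_of_countable hα (fun p hp => (continuous_of_mem_trigPoly hp).measurable)
    hTc hTμ (fun F hF g => ?_) hg hgint.ne
  rw [trigPoly_eq_adjoin]
  refine exists_seq_tendsto_indicator _ (fun i hi => ?_) F hF g
  refine exists_seq_tendsto_ite_of_countable (Algebra.adjoin ℂ _).toSubsemiring.toSubmonoid hTc
    fun z hz hzi => ?_
  obtain ⟨h, hh, hne⟩ := exists_apply_ne_of_injOn_mk hinj hi hz (Ne.symm hzi)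
  simpa [trigPoly_eq_adjoin] using exists_seq_trigPoly_peak hh hne

/-- Theorem 3.2: if μ is a regular finite Borel measure on the dual group Γ
of G whose image on Γ/Λ is discrete and which is concentrated on a transversal, then the
trigonometric H-polynomials are dense in L^α(μ) for every α ∈ (0,∞). -/
theorem dense_of_transversal_discrete
    (H : Subgroup G) (hH : IsClosed (H : Set G))
    [MeasurableSpace (PontryaginDual G)] [BorelSpace (PontryaginDual G)]
    (μ : Measure (PontryaginDual G)) [IsFiniteMeasure μ] (hreg : PaperRegular μ)
    (hdisc : IsDiscreteMeasure (μ.map (QuotientGroup.mk (s := annihilator H))))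
    (htrans : ConcOnTransversal (annihilator H) μ) :
    ∀ α : ℝ, 0 < α → DenseInLp μ α (trigPoly H) :=
  dense_of_transversal_discrete_general H μ hdisc htrans
end
end

section
/- Let Γ be a Polish LCA group, Λ a closed subgroup, π : Γ → Γ/Λ the quotient map, and μ a finite Borel measure on Γ. Then μ is concentrated on a transversal (∃ Borel D with μ(Γ\D)=0 and D∩(λ+D)=∅ for all λ∈Λ\{0}) if and only if there exists a Borel measurable function τ : Γ/Λ → Γ with τ(γ̃) ∈ π⁻¹({γ̃}) for all γ̃, such that ∫_Γ f dμ = ∫_{Γ/Λ} f(τ(γ̃)) d(μπ⁻¹)(γ̃) for all f ∈ L¹(μ). -/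
/-! A Borel cross-section of `Γ → Γ/Λ` is built by successive approximation: the quotient map
is open, so the set of cosets meeting a ball is open, and choosing from a dense sequence the
first centre whose ball meets the coset (and which stays close to the previous choice) is Borel.
These choices are Cauchy, and their limit lies in the closed coset.

If `D` is a transversal of full measure, `π` is injective on `D`, so by Lusin–Souslin its inverse
on `π(D)` is Borel; completing it by a cross-section gives `τ` with `τ ∘ π = id` `μ`-a.e., that
is `(μπ⁻¹)τ⁻¹ = μ`. Conversely, the integral identity on indicators gives `(μπ⁻¹)τ⁻¹ = μ`, and
`{γ | τ (π γ) = γ}` is a transversal of full measure because `τ` takes its values there. -/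

open MeasureTheory Set

/-- μ is concentrated on a transversal: there is a Borel set D of full measure meeting each
Λ-coset at most once. -/
def ConcentratedOnTransversal {Γ : Type*} [AddCommGroup Γ] [TopologicalSpace Γ]
    [MeasurableSpace Γ] (Λ : AddSubgroup Γ) (μ : Measure Γ) : Prop :=
  ∃ D : Set Γ, MeasurableSet D ∧ μ Dᶜ = 0 ∧
    ∀ l ∈ Λ, l ≠ (0 : Γ) → D ∩ ((fun t => l + t) '' D) = ∅

open Filter Function Metric Topology TopologicalSpace
open scoped ENNReal

section MeasurableSection

variable {X Y : Type*} [PseudoMetricSpace X]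

def IsApproxSection (π : X → Y) (ε : ℝ≥0∞) (f : Y → X) : Prop :=
  ∀ q, infEDist (f q) (π ⁻¹' {q}) < ε

variable {π : X → Y}

theorem rightInverse_of_tendsto_of_isApproxSection (hfib : ∀ q, IsClosed (π ⁻¹' {q}))
    {F : ℕ → Y → X} {ε : ℕ → ℝ≥0∞} (hF : ∀ n, IsApproxSection π (ε n) (F n))
    (hε : Tendsto ε atTop (𝓝 0)) {σ : Y → X} (hσ : ∀ q, Tendsto (F · q) atTop (𝓝 (σ q))) :
    RightInverse σ π := by
  intro q
  have hdist : infEDist (σ q) (π ⁻¹' {q}) ≤ 0 :=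
    le_of_tendsto_of_tendsto' ((continuous_infEDist.tendsto _).comp (hσ q)) hε
      fun n => (hF n q).le
  rw [← mem_singleton_iff, ← mem_preimage, ← (hfib q).closure_eq,
    mem_closure_iff_infEDist_zero]
  exact le_antisymm hdist bot_le

variable [TopologicalSpace Y] [MeasurableSpace Y] [OpensMeasurableSpace Y] [MeasurableSpace X]

theorem IsApproxSection.exists_measurable_refine [OpensMeasurableSpace X] [SeparableSpace X]
    [Nonempty X] (hπ : IsOpenMap π) {f : Y → X} {δ ε : ℝ≥0∞} (hfm : Measurable f)
    (hf : IsApproxSection π δ f) (hε : 0 < ε) :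
    ∃ g : Y → X, Measurable g ∧ IsApproxSection π ε g ∧ ∀ q, edist (g q) (f q) < δ + ε := by
  classical
  set u := denseSeq X
  have hex : ∀ q, ∃ i, q ∈ π '' eball (u i) ε ∧ f q ∈ eball (u i) (δ + ε) := by
    intro q
    obtain ⟨y, hyq, hy⟩ := infEDist_lt_iff.1 (hf q)
    obtain ⟨_, ⟨i, rfl⟩, hi⟩ :=
      EMetric.mem_closure_iff.1 (denseRange_denseSeq X y) ε hε
    refine ⟨i, ⟨y, mem_eball.2 hi, hyq⟩, mem_eball.2 ?_⟩
    exact (edist_triangle _ y _).trans_lt (ENNReal.add_lt_add hy hi)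
  refine ⟨fun q => u (Nat.find (hex q)), ?_, fun q => ?_, fun q => ?_⟩
  · refine Measurable.find (fun _ => measurable_const) (fun i => ?_) hex
    exact (hπ _ isOpen_eball).measurableSet.inter (hfm isOpen_eball.measurableSet)
  · obtain ⟨⟨y, hy, hyq⟩, -⟩ := Nat.find_spec (hex q)
    exact (infEDist_le_edist_of_mem (s := π ⁻¹' {q}) hyq).trans_lt (mem_eball'.1 hy)
  · exact mem_eball'.1 (Nat.find_spec (hex q)).2

theorem exists_measurable_rightInverse_of_isOpenMap [CompleteSpace X] [SeparableSpace X]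
    [Nonempty X] [BorelSpace X] (hπ : IsOpenMap π) (hsurj : Surjective π)
    (hfib : ∀ q, IsClosed (π ⁻¹' {q})) :
    ∃ σ : Y → X, Measurable σ ∧ RightInverse σ π := by
  have step : ∀ (n : ℕ) (f : Y → X), Measurable f ∧ IsApproxSection π (2⁻¹ ^ n) f →
      ∃ g, (Measurable g ∧ IsApproxSection π (2⁻¹ ^ (n + 1)) g) ∧
        ∀ q, edist (g q) (f q) < 2⁻¹ ^ n + 2⁻¹ ^ (n + 1) := fun n f hf => by
    obtain ⟨g, hgm, hg, hgf⟩ := hf.2.exists_measurable_refine (ε := 2⁻¹ ^ (n + 1)) hπ hf.1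
      (ENNReal.pow_pos (by norm_num) _)
    exact ⟨g, ⟨hgm, hg⟩, hgf⟩
  choose! next hnext hnext_edist using step
  obtain ⟨f₀, hf₀m, hf₀, -⟩ := IsApproxSection.exists_measurable_refine (δ := ∞) (ε := 2⁻¹ ^ 0)
    hπ (measurable_const (a := Classical.arbitrary X))
    (fun q => (infEDist_ne_top (hsurj q)).lt_top) (ENNReal.pow_pos (by norm_num) _)
  let F : ℕ → Y → X := fun n => Nat.rec f₀ next n
  have hF : ∀ n, Measurable (F n) ∧ IsApproxSection π (2⁻¹ ^ n) (F n) := fun n => by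
    induction n with
    | zero => exact ⟨hf₀m, hf₀⟩
    | succ n ih => exact hnext n (F n) ih
  have hcauchy : ∀ q, CauchySeq (F · q) := fun q => by
    refine cauchySeq_of_edist_le_geometric 2⁻¹ 2 (by norm_num) (by norm_num) fun n => ?_
    rw [edist_comm, two_mul]
    exact (hnext_edist n (F n) (hF n) q).le.trans
      (add_le_add le_rfl (pow_le_pow_right_of_le_one' (by norm_num) n.le_succ))
  choose σ hσ using fun q => cauchySeq_tendsto_of_complete (hcauchy q)
  exact ⟨σ, measurable_of_tendsto_metrizable (fun n => (hF n).1) (tendsto_pi_nhds.2 hσ),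
    rightInverse_of_tendsto_of_isApproxSection hfib (fun n => (hF n).2)
      (ENNReal.tendsto_pow_atTop_nhds_zero_iff.2 (by norm_num)) hσ⟩

end MeasurableSection

theorem QuotientAddGroup.exists_measurable_rightInverse_mk {Γ : Type*} [AddGroup Γ]
    [TopologicalSpace Γ] [IsTopologicalAddGroup Γ] [PolishSpace Γ] [MeasurableSpace Γ]
    [BorelSpace Γ] (Λ : AddSubgroup Γ) (hΛ : IsClosed (Λ : Set Γ)) [MeasurableSpace (Γ ⧸ Λ)]
    [OpensMeasurableSpace (Γ ⧸ Λ)] :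
    ∃ σ : Γ ⧸ Λ → Γ, Measurable σ ∧ RightInverse σ ((↑) : Γ → Γ ⧸ Λ) := by
  have : T1Space (Γ ⧸ Λ) := t1Space_iff.2 hΛ
  let := upgradeIsCompletelyMetrizable Γ
  exact exists_measurable_rightInverse_of_isOpenMap isOpenMap_coe mk_surjective
    fun _ => isClosed_singleton.preimage continuous_mk

theorem exists_measurable_rightInverse_leftInvOn {X Y : Type*} [MeasurableSpace X]
    [StandardBorelSpace X] [MeasurableSpace Y] [MeasurableSpace.CountablySeparated Y]
    {π : X → Y} (hπ : Measurable π) {D : Set X} (hD : MeasurableSet D) (hinj : InjOn π D)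
    {σ : Y → X} (hσm : Measurable σ) (hσ : RightInverse σ π) :
    ∃ τ : Y → X, Measurable τ ∧ RightInverse τ π ∧ LeftInvOn τ π D := by
  classical
  have : StandardBorelSpace D := hD.standardBorel
  have hemb : MeasurableEmbedding (D.domRestrict π) :=
    (hπ.comp measurable_subtype_coe).measurableEmbedding hinj.injective
  obtain ⟨g, hgm, hg⟩ := hemb.exists_measurable_extend measurable_subtype_coe fun q => ⟨σ q⟩
  refine ⟨(range (D.domRestrict π)).piecewise g σ, hgm.piecewise hemb.measurableSet_range hσm,
    fun q => ?_, fun x hx => ?_⟩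
  · by_cases hq : q ∈ range (D.domRestrict π)
    · obtain ⟨x, rfl⟩ := hq
      rw [piecewise_eq_of_mem _ _ _ (mem_range_self x)]
      exact congrArg π (congrFun hg x)
    · rw [piecewise_eq_of_notMem _ _ _ hq, hσ q]
  · have hπx : π x ∈ range (D.domRestrict π) := ⟨⟨x, hx⟩, rfl⟩
    rw [piecewise_eq_of_mem _ _ _ hπx]
    exact congrFun hg ⟨x, hx⟩

theorem QuotientAddGroup.injOn_mk_iff {Γ : Type*} [AddCommGroup Γ] {Λ : AddSubgroup Γ}
    {D : Set Γ} :
    InjOn ((↑) : Γ → Γ ⧸ Λ) D ↔ ∀ l ∈ Λ, l ≠ 0 → D ∩ (fun t => l + t) '' D = ∅ := by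
  constructor
  · rintro hinj l hl hl0
    refine eq_empty_iff_forall_notMem.2 ?_
    rintro _ ⟨hlx, x, hx, rfl⟩
    have hcoset : ((l + x : Γ) : Γ ⧸ Λ) = x := eq_iff_sub_mem.2 (by simpa using hl)
    exact hl0 (add_eq_right.1 (hinj hlx hx hcoset))
  · intro h x hx y hy hxy
    by_contra hne
    exact (h _ (eq_iff_sub_mem.1 hxy) (sub_ne_zero.2 hne)).subset ⟨hx, y, hy, sub_add_cancel x y⟩

theorem map_eq_of_forall_integral_comp_eq {X Y : Type*} [MeasurableSpace X] [MeasurableSpace Y]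
    {μ : Measure X} {ν : Measure Y} [IsFiniteMeasure μ] [IsFiniteMeasure ν] {τ : Y → X}
    (hτ : Measurable τ)
    (h : ∀ f : X → ℂ, Integrable f μ → ∫ x, f x ∂μ = ∫ y, f (τ y) ∂ν) : ν.map τ = μ := by
  ext s hs
  have hs' := h _ ((integrable_const (1 : ℂ)).indicator hs)
  rw [integral_indicator_const _ hs, show (fun y => s.indicator (fun _ => (1 : ℂ)) (τ y)) =
    (τ ⁻¹' s).indicator fun _ => 1 from rfl, integral_indicator_const _ (hτ hs)] at hs'
  simp only [Complex.real_smul, mul_one, Complex.ofReal_inj] at hs'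
  rw [Measure.map_apply hτ hs]
  exact (ENNReal.toReal_eq_toReal_iff' (measure_ne_top _ _) (measure_ne_top _ _)).1 hs'.symm

section

variable {X Y : Type*} [MeasurableSpace X] [MeasurableSpace Y] {μ : Measure X} {π : X → Y}
  {τ : Y → X}

theorem map_map_eq_self_of_ae_leftInverse (hπ : Measurable π) (hτ : Measurable τ)
    (h : ∀ᵐ x ∂μ, τ (π x) = x) : (μ.map π).map τ = μ := by
  rw [Measure.map_map hτ hπ, Measure.map_congr (f := τ ∘ π) (g := id) h, Measure.map_id]

theorem ae_leftInverse_of_map_map_eq_self [MeasurableEq X] (hπ : Measurable π)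
    (hτ : Measurable τ) (hsec : RightInverse τ π) (hmap : (μ.map π).map τ = μ) :
    ∀ᵐ x ∂μ, τ (π x) = x := by
  rw [← hmap]
  exact (ae_map_iff hτ.aemeasurable (measurableSet_eq_fun (hτ.comp hπ) measurable_id)).2
    (Eventually.of_forall fun q => congrArg τ (hsec q))

end

theorem concentratedOnTransversal_iff_section_general
    {Γ : Type*} [AddCommGroup Γ] [TopologicalSpace Γ] [IsTopologicalAddGroup Γ]
    [PolishSpace Γ] [MeasurableSpace Γ] [BorelSpace Γ]
    (Λ : AddSubgroup Γ) (hΛ : IsClosed (Λ : Set Γ)) [BorelSpace (Γ ⧸ Λ)]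
    (μ : Measure Γ) [IsFiniteMeasure μ] :
    ConcentratedOnTransversal Λ μ ↔
      ∃ τ : Γ ⧸ Λ → Γ, Measurable τ ∧
        (∀ q : Γ ⧸ Λ, QuotientAddGroup.mk (s := Λ) (τ q) = q) ∧
        ∀ f : Γ → ℂ, Integrable f μ →
          (∫ γ, f γ ∂μ) =
            ∫ q, f (τ q) ∂(μ.map (QuotientAddGroup.mk (s := Λ))) := by
  have hπ : Measurable ((↑) : Γ → Γ ⧸ Λ) := QuotientAddGroup.continuous_mk.measurable
  constructor
  · rintro ⟨D, hDm, hDnull, hD⟩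
    obtain ⟨σ, hσm, hσ⟩ := QuotientAddGroup.exists_measurable_rightInverse_mk Λ hΛ
    obtain ⟨τ, hτm, hτ, hτD⟩ := exists_measurable_rightInverse_leftInvOn hπ hDm
      (QuotientAddGroup.injOn_mk_iff.2 hD) hσm hσ
    have hmap := map_map_eq_self_of_ae_leftInverse hπ hτm
      ((ae_iff.2 hDnull).mono hτD)
    refine ⟨τ, hτm, hτ, fun f hf => ?_⟩
    rw [← integral_map hτm.aemeasurable (by rw [hmap]; exact hf.aestronglyMeasurable), hmap]
  · rintro ⟨τ, hτm, hτ, hint⟩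
    have hmap := map_eq_of_forall_integral_comp_eq hτm hint
    refine ⟨{x | τ x = x}, measurableSet_eq_fun (hτm.comp hπ) measurable_id,
      ae_iff.1 (ae_leftInverse_of_map_map_eq_self hπ hτm hτ hmap),
      QuotientAddGroup.injOn_mk_iff.1 (LeftInvOn.injOn fun _ hx => hx)⟩

/-- for a Polish LCA group Γ, a closed subgroup Λ and a finite Borel measure μ,
μ is concentrated on a transversal iff there is a Borel measurable cross-section
τ : Γ/Λ → Γ such that μ is the image of μπ⁻¹ under τ, i.e.
∫ f dμ = ∫ f∘τ d(μπ⁻¹) for all f ∈ L¹(μ). -/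
theorem concentratedOnTransversal_iff_section
    {Γ : Type*} [AddCommGroup Γ] [TopologicalSpace Γ] [IsTopologicalAddGroup Γ]
    [LocallyCompactSpace Γ] [PolishSpace Γ] [MeasurableSpace Γ] [BorelSpace Γ]
    (Λ : AddSubgroup Γ) (hΛ : IsClosed (Λ : Set Γ)) [BorelSpace (Γ ⧸ Λ)]
    (μ : Measure Γ) [IsFiniteMeasure μ] :
    ConcentratedOnTransversal Λ μ ↔
      ∃ τ : Γ ⧸ Λ → Γ, Measurable τ ∧
        (∀ q : Γ ⧸ Λ, QuotientAddGroup.mk (s := Λ) (τ q) = q) ∧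
        ∀ f : Γ → ℂ, Integrable f μ →
          (∫ γ, f γ ∂μ) =
            ∫ q, f (τ q) ∂(μ.map (QuotientAddGroup.mk (s := Λ))) :=
  concentratedOnTransversal_iff_section_general Λ hΛ μ
end
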